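/- For an admissible warping path π between two sequences of equal length L, the quantity WPD_d(π) = (√2/(2·|π|))·Σ_k |π_{k,1} − π_{k,2}| satisfies 0 ≤ WPD_d(π) ≤ (√2/4)·(L+1). -/

import Mathlib

/-- A single admissible step of a warping path: each coordinate stays or
increases by one, and not both stay. -/
def WarpStep (p q : ℕ × ℕ) : Prop :=
  (q.1 = p.1 ∨ q.1 = p.1 + 1) ∧ (q.2 = p.2 ∨ q.2 = p.2 + 1) ∧ q ≠ p

/-- An admissible warping path between two sequences of length `L`. -/
def IsAdmissible (L : ℕ) (π : List (ℕ × ℕ)) : Prop :=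
  π.head? = some (0, 0) ∧ π.getLast? = some (L - 1, L - 1) ∧ π.Chain' WarpStep

/-- The warping path diversity of a path. -/
noncomputable def WPDd (π : List (ℕ × ℕ)) : ℝ :=
  Real.sqrt 2 / (2 * π.length) * (π.map fun p => |(p.1 : ℝ) - (p.2 : ℝ)|).sum

/-! Along a warping path `(i_k, j_k)`, `k ≤ m`, the offset `i_k - j_k` changes by at most one per
step and vanishes at both ends, so `|i_k - j_k| ≤ min k (m - k)` and the offsets sum to at most
`m² / 4`. Since `i_k + j_k` increases at every step, from `0` to `2 (L - 1)`, also `m ≤ 2 (L - 1)`,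
whence `2 ∑ |i_k - j_k| ≤ m² / 2 ≤ (m + 1) (L + 1)`. -/

open Finset

theorem List.sum_map_eq_sum_range_getD {α M : Type*} [AddCommMonoid M] (f : α → M) (d : α) :
    ∀ l : List α, (l.map f).sum = ∑ k ∈ Finset.range l.length, f (l.getD k d)
  | [] => by simp
  | a :: l => by
    rw [List.map_cons, List.sum_cons, List.length_cons, Finset.sum_range_succ',
      List.sum_map_eq_sum_range_getD f d l, add_comm]
    simp

theorem four_mul_sum_range_min_le : ∀ m : ℕ, 4 * ∑ k ∈ range (m + 1), min k (m - k) ≤ m * m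
  | 0 => by simp
  | 1 => by decide
  | m + 2 => by
    have peel : ∑ k ∈ range (m + 3), min k (m + 2 - k)
        = ∑ k ∈ range (m + 1), (min k (m - k) + 1) := by
      have hshift : ∀ k ∈ range (m + 1), min (k + 1) (m + 2 - (k + 1)) = min k (m - k) + 1 :=
        fun k hk => by have := mem_range.mp hk; omega
      rw [sum_range_succ', sum_range_succ, sum_congr rfl hshift]
      simp
    have ih := four_mul_sum_range_min_le m
    rw [peel, sum_add_distrib, sum_const, card_range, smul_eq_mul, mul_one]
    nlinarith

theorem abs_sub_le_of_forall_abs_succ_sub_le {u : ℕ → ℤ} {i j : ℕ} (hij : i ≤ j)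
    (h : ∀ k, i ≤ k → k < j → |u (k + 1) - u k| ≤ 1) : |u j - u i| ≤ j - i := by
  induction j, hij using Nat.le_induction with
  | base => simp
  | succ j hij ih =>
    have hlast := h j hij (by omega)
    have := ih fun k hik hkj => h k hik (by omega)
    calc |u (j + 1) - u i| ≤ |u (j + 1) - u j| + |u j - u i| := abs_sub_le _ _ _
      _ ≤ ((j + 1 : ℕ) : ℤ) - i := by push_cast; linarith

theorem add_le_of_forall_lt_succ {u : ℕ → ℕ} {m : ℕ} (h : ∀ k < m, u k < u (k + 1)) :
    u 0 + m ≤ u m := by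
  induction m with
  | zero => simp
  | succ m ih =>
    have := ih fun k hk => h k (by omega)
    have := h m (by omega)
    omega

def diagOffset (p : ℕ × ℕ) : ℤ := p.1 - p.2

namespace WarpStep

variable {p q : ℕ × ℕ}

theorem abs_diagOffset_sub_le (h : WarpStep p q) : |diagOffset q - diagOffset p| ≤ 1 := by
  obtain ⟨h1, h2, -⟩ := h
  rw [abs_le, diagOffset, diagOffset]
  omega

theorem add_lt_add (h : WarpStep p q) : p.1 + p.2 < q.1 + q.2 := by
  obtain ⟨h1, h2, hne⟩ := h
  have : q.1 ≠ p.1 ∨ q.2 ≠ p.2 := by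
    by_contra! heq
    exact hne (Prod.ext heq.1 heq.2)
  omega

end WarpStep

section Sequence

variable {p : ℕ → ℕ × ℕ} {m M : ℕ}

theorem le_two_mul_of_warpStep (h0 : p 0 = (0, 0)) (hm : p m = (M, M))
    (hstep : ∀ k < m, WarpStep (p k) (p (k + 1))) : m ≤ 2 * M := by
  have := add_le_of_forall_lt_succ (u := fun k => (p k).1 + (p k).2) fun k hk =>
    (hstep k hk).add_lt_add
  simp only [h0, hm] at this
  omega

theorem four_mul_sum_abs_diagOffset_le (h0 : p 0 = (0, 0)) (hm : p m = (M, M))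
    (hstep : ∀ k < m, WarpStep (p k) (p (k + 1))) :
    4 * ∑ k ∈ range (m + 1), |diagOffset (p k)| ≤ m * m := by
  have hlip : ∀ i j, i ≤ j → j ≤ m → |diagOffset (p j) - diagOffset (p i)| ≤ j - i :=
    fun i j hij hjm => abs_sub_le_of_forall_abs_succ_sub_le (u := fun k => diagOffset (p k)) hij
      fun k _ hkj => (hstep k (by omega)).abs_diagOffset_sub_le
  have htent : ∀ k ∈ range (m + 1), |diagOffset (p k)| ≤ ((min k (m - k) : ℕ) : ℤ) := by
    intro k hk
    have hkm := Nat.lt_succ_iff.mp (mem_range.mp hk)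
    have hstart := hlip 0 k k.zero_le hkm
    have hend := hlip k m hkm le_rfl
    rw [h0] at hstart
    rw [hm] at hend
    simp only [diagOffset, sub_self, Nat.cast_zero, sub_zero, zero_sub, abs_neg] at hstart hend
    rw [Nat.cast_min, Nat.cast_sub hkm]
    exact le_min hstart hend
  calc 4 * ∑ k ∈ range (m + 1), |diagOffset (p k)|
      ≤ 4 * ∑ k ∈ range (m + 1), ((min k (m - k) : ℕ) : ℤ) := by
        gcongr with k hk
        exact htent k hk
    _ ≤ m * m := by exact_mod_cast four_mul_sum_range_min_le m

end Sequence

namespace IsAdmissible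

variable {L : ℕ} {π : List (ℕ × ℕ)}

theorem length_pos (hπ : IsAdmissible L π) : 0 < π.length := by
  obtain ⟨hhead, -, -⟩ := hπ
  cases π <;> simp_all

theorem getD_zero (hπ : IsAdmissible L π) : π.getD 0 (0, 0) = (0, 0) := by
  obtain ⟨hhead, -, -⟩ := hπ
  cases π <;> simp_all

theorem getD_length_sub_one (hπ : IsAdmissible L π) :
    π.getD (π.length - 1) (0, 0) = (L - 1, L - 1) := by
  obtain ⟨-, hlast, -⟩ := hπ
  rw [List.getD_eq_getElem?_getD, ← List.getLast?_eq_getElem?, hlast, Option.getD_some]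

theorem warpStep_getD (hπ : IsAdmissible L π) {k : ℕ} (hk : k + 1 < π.length) :
    WarpStep (π.getD k (0, 0)) (π.getD (k + 1) (0, 0)) := by
  rw [List.getD_eq_getElem _ _ (by omega), List.getD_eq_getElem _ _ hk]
  exact hπ.2.2.getElem k hk

theorem two_mul_sum_le (hπ : IsAdmissible L π) :
    2 * (π.map fun p => |(p.1 : ℝ) - (p.2 : ℝ)|).sum ≤ π.length * (L + 1) := by
  obtain ⟨m, hlen⟩ : ∃ m, π.length = m + 1 := ⟨π.length - 1, by have := hπ.length_pos; omega⟩
  set p : ℕ → ℕ × ℕ := fun k => π.getD k (0, 0)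
  have h0 : p 0 = (0, 0) := hπ.getD_zero
  have hm : p m = (L - 1, L - 1) := by
    have := hπ.getD_length_sub_one
    rwa [hlen, Nat.add_sub_cancel] at this
  have hstep : ∀ k < m, WarpStep (p k) (p (k + 1)) := fun k hk => hπ.warpStep_getD (by omega)
  have hmL : (m : ℝ) ≤ 2 * L := by
    have := le_two_mul_of_warpStep h0 hm hstep
    exact_mod_cast (by omega : m ≤ 2 * L)
  have hS : (π.map fun p => |(p.1 : ℝ) - (p.2 : ℝ)|).sum
      = ∑ k ∈ range (m + 1), ((|diagOffset (p k)| : ℤ) : ℝ) := by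
    rw [List.sum_map_eq_sum_range_getD _ (0, 0), hlen]
    simp [diagOffset, p]
  have hsumR : 4 * ∑ k ∈ range (m + 1), ((|diagOffset (p k)| : ℤ) : ℝ) ≤ m * m := by
    exact_mod_cast four_mul_sum_abs_diagOffset_le h0 hm hstep
  rw [hS, hlen, Nat.cast_succ]
  nlinarith [mul_le_mul_of_nonneg_left hmL m.cast_nonneg]

end IsAdmissible

theorem wpd_bounds_general (L : ℕ) (π : List (ℕ × ℕ))
    (hπ : IsAdmissible L π) :
    0 ≤ WPDd π ∧ WPDd π ≤ Real.sqrt 2 / 4 * (L + 1) := by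
  have hlen : (0 : ℝ) < π.length := by exact_mod_cast hπ.length_pos
  refine ⟨mul_nonneg (by positivity) (List.sum_nonneg fun x hx => ?_), ?_⟩
  · obtain ⟨p, -, rfl⟩ := List.mem_map.mp hx
    positivity
  rw [WPDd, div_mul_eq_mul_div, div_le_iff₀ (by positivity)]
  calc √2 * (π.map fun p => |(p.1 : ℝ) - (p.2 : ℝ)|).sum
      ≤ √2 * (π.length * (L + 1) / 2) := by gcongr; linarith [hπ.two_mul_sum_le]
    _ = √2 / 4 * (L + 1) * (2 * π.length) := by ring

theorem wpd_bounds (L : ℕ) (hL : 1 ≤ L) (π : List (ℕ × ℕ))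
    (hπ : IsAdmissible L π) :
    0 ≤ WPDd π ∧ WPDd π ≤ Real.sqrt 2 / 4 * (L + 1) :=
  wpd_bounds_general L π hπ
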